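/- In the structured increasing shrinkage process where γ_h = ϑ_h ρ_h, ϑ_h^{-1} ~ Gamma(a_θ, b_θ) with a_θ > 1, and ρ_h ~ Ber(1 − π_h) with π_h from stick-breaking with Beta(1, α) sticks, we have E(γ_h) = (b_θ/(a_θ − 1)) · (α/(1+α))^h; in particular E(γ_h) is strictly decreasing in h and can be written in the form a b^{h-1} with a = (b_θ/(a_θ−1)) α/(1+α) > 0 and b = α/(1+α) ∈ (0,1). -/

import Mathlib

/-!
By independence, `E(ϑ_h ρ_h) = E(ϑ_h) E(ρ_h)`. Multiplying the `Gamma(a, b)` density by `x⁻¹`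
gives `b / (a - 1)` times the `Gamma(a - 1, b)` density, so `E(ϑ_h) = b_θ / (a_θ - 1)`.
By the tower property and the independence of the sticks,
`E(ρ_h) = E ∏_{m ≤ h} (1 - v_m) = (α / (1 + α))^(h + 1)`.
-/

open MeasureTheory ProbabilityTheory Real

lemma integral_gammaMeasure_eq_integral_gammaPDFReal_mul {a r : ℝ} (ha : 0 < a) (hr : 0 < r)
    (g : ℝ → ℝ) : ∫ x, g x ∂gammaMeasure a r = ∫ x, gammaPDFReal a r x * g x := by
  rw [gammaMeasure, integral_withDensity_eq_integral_toReal_smul (f := gammaPDF a r)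
    (measurable_gammaPDFReal a r).ennreal_ofReal (ae_of_all _ fun _ ↦ by simp [gammaPDF])]
  refine integral_congr_ae (ae_of_all _ fun x ↦ ?_)
  simp [gammaPDF, ENNReal.toReal_ofReal (gammaPDFReal_nonneg ha hr x)]

lemma gammaPDFReal_mul_inv {a r x : ℝ} (ha : a ≠ 1) (hr : 0 < r) (hx : x ≠ 0) :
    gammaPDFReal a r x * x⁻¹ = r / (a - 1) * gammaPDFReal (a - 1) r x := by
  rcases hx.lt_or_gt with hx | hx
  · simp [gammaPDFReal, hx.not_ge]
  have ha' : a - 1 ≠ 0 := sub_ne_zero.mpr ha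
  have hΓ : Gamma a = (a - 1) * Gamma (a - 1) := by
    simpa using Real.Gamma_add_one ha'
  have hr_pow : r ^ a = r * r ^ (a - 1) := by
    conv_lhs => rw [show a = 1 + (a - 1) by ring, rpow_add hr, rpow_one]
  have hx_pow : x ^ (a - 1) = x ^ (a - 1 - 1) * x := by
    rw [← rpow_add_one hx.ne']; ring_nf
  simp only [gammaPDFReal, if_pos hx.le, hΓ, hr_pow, hx_pow]
  field_simp

lemma integral_inv_gammaMeasure {a r : ℝ} (ha : 1 < a) (hr : 0 < r) :
    ∫ x, x⁻¹ ∂gammaMeasure a r = r / (a - 1) := by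
  have ha' : 0 < a - 1 := sub_pos.mpr ha
  have := isProbabilityMeasure_gammaMeasure ha' hr
  calc ∫ x, x⁻¹ ∂gammaMeasure a r
      = ∫ x, r / (a - 1) * gammaPDFReal (a - 1) r x := by
        rw [integral_gammaMeasure_eq_integral_gammaPDFReal_mul (by linarith) hr]
        refine integral_congr_ae ?_
        filter_upwards [Measure.ae_ne volume 0] with x hx
          using gammaPDFReal_mul_inv ha.ne' hr hx
    _ = r / (a - 1) * ∫ x, 1 ∂gammaMeasure (a - 1) r := by
        simp only [integral_gammaMeasure_eq_integral_gammaPDFReal_mul ha' hr, mul_one,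
          integral_const_mul]
    _ = r / (a - 1) := by simp

lemma integral_eq_of_map_inv_eq_gammaMeasure {Ω : Type*} [MeasurableSpace Ω] {μ : Measure Ω}
    {X : Ω → ℝ} {a r : ℝ} (ha : 1 < a) (hr : 0 < r) (hX : AEMeasurable X μ)
    (hlaw : μ.map (fun ω ↦ (X ω)⁻¹) = gammaMeasure a r) :
    ∫ ω, X ω ∂μ = r / (a - 1) := by
  calc ∫ ω, X ω ∂μ = ∫ ω, ((X ω)⁻¹)⁻¹ ∂μ := by simp
    _ = r / (a - 1) := by
        rw [← integral_inv_gammaMeasure ha hr, ← hlaw,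
          integral_map (φ := fun ω ↦ (X ω)⁻¹) hX.inv measurable_inv.aestronglyMeasurable]

lemma ProbabilityTheory.iIndepFun.integral_finset_prod_eq_prod_integral {Ω ι : Type*}
    [MeasurableSpace Ω] {μ : Measure Ω} {X : ι → Ω → ℝ} (hX : iIndepFun X μ)
    (mX : ∀ i, AEStronglyMeasurable (X i) μ) (s : Finset ι) :
    ∫ ω, ∏ i ∈ s, X i ω ∂μ = ∏ i ∈ s, ∫ ω, X i ω ∂μ := by
  simp_rw [← Finset.prod_coe_sort s]
  exact (hX.precomp Subtype.val_injective).integral_fun_prod_eq_prod_integral fun i ↦ mX i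

theorem sis_column_scale_mean_general
    {Ω : Type*} [MeasurableSpace Ω] (μ : Measure Ω) [IsProbabilityMeasure μ]
    (α aθ bθ : ℝ) (hα : 0 < α) (haθ : 1 < aθ) (hbθ : 0 < bθ)
    (θh ρ v : ℕ → Ω → ℝ)
    (hθmeas : ∀ h, Measurable (θh h)) (hρmeas : ∀ h, Measurable (ρ h))
    (hvmeas : ∀ m, Measurable (v m))
    (hlaw : ∀ h, Measure.map (fun ω => (θh h ω)⁻¹) μ = gammaMeasure aθ bθ)
    (hvmean : ∀ m, ∫ ω, (1 - v m ω) ∂μ = α / (1 + α))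
    (hvindep : iIndepFun v μ)
    (hcond : ∀ h,
      μ[ρ h | MeasurableSpace.comap (fun ω (m : ℕ) => v m ω) inferInstance]
        =ᵐ[μ] fun ω => ∏ m ∈ Finset.range (h + 1), (1 - v m ω))
    (hρθindep : ∀ h, IndepFun (θh h) (ρ h) μ) :
    (∀ h : ℕ, ∫ ω, θh h ω * ρ h ω ∂μ = bθ / (aθ - 1) * (α / (1 + α)) ^ (h + 1)) ∧
      (∀ h : ℕ, ∫ ω, θh (h + 1) ω * ρ (h + 1) ω ∂μ < ∫ ω, θh h ω * ρ h ω ∂μ) ∧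
      (∀ h : ℕ, ∫ ω, θh h ω * ρ h ω ∂μ
          = (bθ / (aθ - 1) * (α / (1 + α))) * (α / (1 + α)) ^ h) := by
  set r := α / (1 + α)
  set c := bθ / (aθ - 1)
  have hθmean (h : ℕ) : ∫ ω, θh h ω ∂μ = c :=
    integral_eq_of_map_inv_eq_gammaMeasure haθ hbθ (hθmeas h).aemeasurable (hlaw h)
  have hsticks : iIndepFun (fun m ω ↦ 1 - v m ω) μ :=
    hvindep.comp (fun _ x ↦ 1 - x) fun _ ↦ measurable_const.sub measurable_id
  have hρmean (h : ℕ) : ∫ ω, ρ h ω ∂μ = r ^ (h + 1) := by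
    rw [← integral_condExp (measurable_pi_lambda _ hvmeas).comap_le, integral_congr_ae (hcond h),
      hsticks.integral_finset_prod_eq_prod_integral
        (fun m ↦ (measurable_const.sub (hvmeas m)).aestronglyMeasurable)]
    simp only [hvmean, Finset.prod_const, Finset.card_range]
  have hmean (h : ℕ) : ∫ ω, θh h ω * ρ h ω ∂μ = c * r ^ (h + 1) := by
    rw [(hρθindep h).integral_fun_mul_eq_mul_integral (hθmeas h).aestronglyMeasurable
      (hρmeas h).aestronglyMeasurable, hθmean, hρmean]
  have hr : 0 < r := by positivity
  have hr1 : r < 1 := (div_lt_one (by positivity)).mpr (by linarith)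
  have hc : 0 < c := div_pos hbθ (by linarith)
  refine ⟨hmean, fun h ↦ ?_, fun h ↦ by rw [hmean]; ring⟩
  rw [hmean, hmean]
  exact mul_lt_mul_of_pos_left (pow_lt_pow_right_of_lt_one₀ hr hr1 (by omega)) hc

/-- Column-scale means of the structured increasing shrinkage process (0-indexed: index
`h` corresponds to column `h+1` of the paper): with `γ_h = ϑ_h ρ_h`,
`ϑ_h⁻¹ ~ Gamma(a_θ, b_θ)` (so `ϑ_h` is inverse-gamma, `a_θ > 1`), `ρ_h` conditionally
Bernoulli given the i.i.d. `Beta(1,α)` sticks with success probability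
`∏_{m=1}^{h+1} (1 - v_m)`, and `ϑ_h ⟂ ρ_h`, one has
`E(γ_h) = (b_θ/(a_θ-1)) (α/(1+α))^{h+1}`; in particular `E(γ_h)` is strictly decreasing
and of the form `a b^h` with `a = (b_θ/(a_θ-1)) α/(1+α)` and `b = α/(1+α) ∈ (0,1)`. -/
theorem sis_column_scale_mean
    {Ω : Type*} [MeasurableSpace Ω] (μ : Measure Ω) [IsProbabilityMeasure μ]
    (α aθ bθ : ℝ) (hα : 0 < α) (haθ : 1 < aθ) (hbθ : 0 < bθ)
    (θh ρ v : ℕ → Ω → ℝ)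
    (hθmeas : ∀ h, Measurable (θh h)) (hρmeas : ∀ h, Measurable (ρ h))
    (hvmeas : ∀ m, Measurable (v m))
    (hθpos : ∀ h, ∀ᵐ ω ∂μ, 0 < θh h ω)
    (hlaw : ∀ h, Measure.map (fun ω => (θh h ω)⁻¹) μ = gammaMeasure aθ bθ)
    (hmem : ∀ m, ∀ᵐ ω ∂μ, v m ω ∈ Set.Ioo (0 : ℝ) 1)
    (hvmean : ∀ m, ∫ ω, (1 - v m ω) ∂μ = α / (1 + α))
    (hvindep : iIndepFun v μ)
    (hber : ∀ h, ∀ᵐ ω ∂μ, ρ h ω = 0 ∨ ρ h ω = 1)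
    (hcond : ∀ h,
      μ[ρ h | MeasurableSpace.comap (fun ω (m : ℕ) => v m ω) inferInstance]
        =ᵐ[μ] fun ω => ∏ m ∈ Finset.range (h + 1), (1 - v m ω))
    (hρθindep : ∀ h, IndepFun (θh h) (ρ h) μ) :
    (∀ h : ℕ, ∫ ω, θh h ω * ρ h ω ∂μ = bθ / (aθ - 1) * (α / (1 + α)) ^ (h + 1)) ∧
      (∀ h : ℕ, ∫ ω, θh (h + 1) ω * ρ (h + 1) ω ∂μ < ∫ ω, θh h ω * ρ h ω ∂μ) ∧
      (∀ h : ℕ, ∫ ω, θh h ω * ρ h ω ∂μ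
          = (bθ / (aθ - 1) * (α / (1 + α))) * (α / (1 + α)) ^ h) :=
  sis_column_scale_mean_general μ α aθ bθ hα haθ hbθ θh ρ v hθmeas hρmeas hvmeas hlaw hvmean hvindep
    hcond hρθindep
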